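/- Let 0 < α < 1, M ∈ ℕ, and let a be a 1/(1+α)-atom supported on I_M (so ∫_{I_M} a dμ = 0 and ‖a‖_∞ ≤ 2^{M(1+α)}). There exists a constant c_α depending only on α such that for every n > 2^M, all integers 0 ≤ k < M, and every x ∈ I_M(e_k), |σ_n^α a(x)| ≤ c_α 2^{αM + k}. -/

import Mathlib

open MeasureTheory Filter Finset
open scoped ENNReal NNReal

noncomputable section

/-- The dyadic group `G = ∏ Z₂`. -/
abbrev G : Type := ℕ → ZMod 2

instance : TopologicalSpace (ZMod 2) := ⊥
instance : DiscreteTopology (ZMod 2) := ⟨rfl⟩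
instance : MeasurableSpace (ZMod 2) := ⊤
instance : BorelSpace (ZMod 2) := ⟨borel_eq_top_of_discrete.symm⟩
instance : ContinuousAdd (ZMod 2) := ⟨continuous_of_discreteTopology⟩
instance : ContinuousNeg (ZMod 2) := ⟨continuous_of_discreteTopology⟩
instance : IsTopologicalAddGroup (ZMod 2) := ⟨⟩

/-- The normalized Haar measure `μ` on the dyadic group `G`. -/
def μG : Measure G := Measure.addHaarMeasure ⊤

/-- The Rademacher functions `r_k(x) = (-1)^{x_k}`. -/
def rad (k : ℕ) (x : G) : ℝ := (-1 : ℝ) ^ (x k).val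

/-- The Walsh functions `w_n = ∏_k r_k^{n_k}`, where `n = ∑ n_k 2^k`. -/
def walsh (n : ℕ) (x : G) : ℝ := ∏ k ∈ Finset.range n, rad k x ^ (Nat.testBit n k).toNat

/-- The Dirichlet kernels `D_n = ∑_{k=0}^{n-1} w_k`. -/
def dirichlet (n : ℕ) (x : G) : ℝ := ∑ k ∈ Finset.range n, walsh k x

/-- The Fejér kernels `K_n = (1/n) ∑_{k=1}^{n} D_k`. -/
def fejer (n : ℕ) (x : G) : ℝ := (n : ℝ)⁻¹ * ∑ k ∈ Finset.Icc 1 n, dirichlet k x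

/-- The Cesàro numbers `A_n^α = ((α+1)⋯(α+n))/n!`. -/
def cesA (α : ℝ) (n : ℕ) : ℝ := (∏ i ∈ Finset.range n, (α + i + 1)) / n.factorial

/-- The `(C,α)` kernels `K_n^α = (1/A_n^α) ∑_{k=1}^n A_{n-k}^{α-1} D_k`. -/
def cesKernel (α : ℝ) (n : ℕ) (x : G) : ℝ :=
  (cesA α n)⁻¹ * ∑ k ∈ Finset.Icc 1 n, cesA (α - 1) (n - k) * dirichlet k x

/-- Walsh–Fourier coefficients of an integrable function. -/
def walshCoeff (f : G → ℝ) (k : ℕ) : ℝ := ∫ x, f x * walsh k x ∂μG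

/-- Partial sums `S_m f` of the Walsh–Fourier series. -/
def partialSum (f : G → ℝ) (m : ℕ) (x : G) : ℝ :=
  ∑ k ∈ Finset.range m, walshCoeff f k * walsh k x

/-- The `(C,α)` means `σ_n^α f = (1/A_n^α) ∑_{k=1}^n A_{n-k}^{α-1} S_k f`. -/
def cesaroMean (α : ℝ) (f : G → ℝ) (n : ℕ) (x : G) : ℝ :=
  (cesA α n)⁻¹ * ∑ k ∈ Finset.Icc 1 n, cesA (α - 1) (n - k) * partialSum f k x

/-- The dyadic interval `I_n(x)`. -/
def dyadicI (n : ℕ) (x : G) : Set G := {y | ∀ i < n, y i = x i}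

/-- `e_k ∈ G`: the element whose `k`-th coordinate is `1` and all others `0`. -/
def eG (k : ℕ) : G := fun i => if i = k then 1 else 0

/-- The projection onto the first `n` coordinates. -/
def projG (n : ℕ) : G → (Fin n → ZMod 2) := fun x i => x i

/-- The dyadic filtration `ℱ_n`, generated by the dyadic intervals of length `n`. -/
def dyadicF : Filtration ℕ (inferInstance : MeasurableSpace G) where
  seq n := MeasurableSpace.comap (projG n) inferInstance
  mono' := by
    intro n m hnm
    have h : projG n = (fun (y : Fin m → ZMod 2) (i : Fin n) => y (Fin.castLE hnm i)) ∘ projG m :=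
      rfl
    simp only []
    rw [h, ← MeasurableSpace.comap_comp]
    exact MeasurableSpace.comap_mono
      ((measurable_pi_lambda _ fun i => measurable_pi_apply _).comap_le)
  le' := fun n => (measurable_pi_lambda _ fun i => measurable_pi_apply _).comap_le

/-- The Walsh–Fourier coefficients `F̂(k) = lim_n ∫ F_n w_k dμ` of a martingale. -/
def martCoeff (F : ℕ → G → ℝ) (k : ℕ) : ℝ :=
  limUnder atTop (fun n => ∫ x, F n x * walsh k x ∂μG)

/-- Partial sums `S_m F` of the Walsh–Fourier series of a martingale. -/
def martSum (F : ℕ → G → ℝ) (m : ℕ) (x : G) : ℝ :=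
  ∑ k ∈ Finset.range m, martCoeff F k * walsh k x

/-- The `(C,α)` means of a martingale. -/
def martCesaro (α : ℝ) (F : ℕ → G → ℝ) (n : ℕ) (x : G) : ℝ :=
  (cesA α n)⁻¹ * ∑ k ∈ Finset.Icc 1 n, cesA (α - 1) (n - k) * martSum F k x

/-- The `L_p(G)` quasi-norm `(∫ |f|^p dμ)^{1/p}`, valued in `ℝ≥0∞`. -/
def LpNormG (p : ℝ) (f : G → ℝ) : ℝ≥0∞ :=
  (∫⁻ x, ENNReal.ofReal |f x| ^ p ∂μG) ^ (1 / p)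

/-- The Hardy space quasi-norm `‖F‖_{H_p} = ‖sup_n |F_n|‖_p` of a martingale. -/
def hardyNorm (p : ℝ) (F : ℕ → G → ℝ) : ℝ≥0∞ :=
  (∫⁻ x, (⨆ n, ENNReal.ofReal |F n x|) ^ p ∂μG) ^ (1 / p)

/-- The Hardy quasi-norm of an integrable function, via its generated martingale `(E_n f)`. -/
def hardyFnNorm (p : ℝ) (f : G → ℝ) : ℝ≥0∞ :=
  hardyNorm p (fun n => μG[f | dyadicF n])

/-!
Write `S_m a(x) = ∫ a(t) D_m(x + t) dμ(t)`. For `t ∈ I_M` the point `x + t` has `k`-th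
coordinate `1`, where the Dirichlet kernel `D_{2^{k+1}} = ∏_{i ≤ k} (1 + r_i)` vanishes; by the
block structure of the Walsh system every `D_m` is then bounded by `2^{k+1}` there. Hence
`|S_m a(x)| ≤ ‖a‖_∞ 2^{k+1} μ(I_M) ≤ 2^{αM + k + 1}`, and for `α > 0` the mean `σ_n^α a(x)` is
a combination of the `S_m a(x)` with positive weights of total mass at most `1`.
-/

lemma rad_add (j : ℕ) (x t : G) : rad j (x + t) = rad j x * rad j t := by
  simp only [rad, Pi.add_apply, ZMod.val_add, ← pow_add]
  exact (neg_one_pow_eq_pow_mod_two _).symm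

lemma rad_mul_self (j : ℕ) (x : G) : rad j x * rad j x = 1 := by
  rw [rad, ← mul_pow]; norm_num

lemma abs_rad (j : ℕ) (x : G) : |rad j x| = 1 := by
  simp [rad]

lemma walsh_eq_prod_range {n N : ℕ} (h : n ≤ N) (x : G) :
    walsh n x = ∏ i ∈ range N, rad i x ^ (n.testBit i).toNat := by
  refine prod_subset (range_subset_range.2 h) fun i _ hi => ?_
  rw [Nat.testBit_lt_two_pow (Nat.lt_two_pow_self.trans_le
    (Nat.pow_le_pow_right two_pos (not_lt.1 (mem_range.not.1 hi))))]
  simp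

lemma walsh_xor (m n : ℕ) (x : G) : walsh (m ^^^ n) x = walsh m x * walsh n x := by
  have hlt {b : ℕ} (hb : b ≤ m + n) : b < 2 ^ (m + n) :=
    Nat.lt_two_pow_self.trans_le (Nat.pow_le_pow_right two_pos hb)
  have hm := hlt (Nat.le_add_right m n)
  have hn := hlt (Nat.le_add_left n m)
  rw [walsh_eq_prod_range (Nat.xor_lt_two_pow hm hn).le, walsh_eq_prod_range hm.le,
    walsh_eq_prod_range hn.le, ← prod_mul_distrib]
  refine prod_congr rfl fun i _ => ?_
  rw [Nat.testBit_xor]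
  cases m.testBit i <;> cases n.testBit i <;> simp [rad_mul_self]

lemma abs_walsh_le_one (n : ℕ) (x : G) : |walsh n x| ≤ 1 := by
  rw [walsh, abs_prod]
  exact prod_le_one (fun _ _ => abs_nonneg _) fun i _ => by rw [abs_pow, abs_rad, one_pow]

lemma walsh_add (n : ℕ) (x t : G) : walsh n (x + t) = walsh n x * walsh n t := by
  simp only [walsh, rad_add, mul_pow, prod_mul_distrib]

lemma walsh_two_pow (s : ℕ) (x : G) : walsh (2 ^ s) x = rad s x := by
  rw [walsh, prod_eq_single_of_mem s (mem_range.2 Nat.lt_two_pow_self)]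
  · simp
  · intro i _ hi
    simp [Nat.testBit_two_pow_of_ne (Ne.symm hi)]

lemma two_pow_mul_add_eq_xor {s r : ℕ} (hr : r < 2 ^ s) (q : ℕ) :
    2 ^ s * q + r = 2 ^ s * q ^^^ r := by
  apply Nat.eq_of_testBit_eq
  intro j
  rw [Nat.testBit_two_pow_mul_add _ hr, Nat.testBit_xor, Nat.testBit_two_pow_mul]
  split_ifs with hj
  · simp [Nat.not_le_of_lt hj]
  · have hsj : s ≤ j := Nat.le_of_not_lt hj
    simp [hsj, Nat.testBit_lt_two_pow (hr.trans_le (Nat.pow_le_pow_right two_pos hsj))]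

lemma walsh_two_pow_mul_add {s r : ℕ} (hr : r < 2 ^ s) (q : ℕ) (x : G) :
    walsh (2 ^ s * q + r) x = walsh (2 ^ s * q) x * walsh r x := by
  rw [two_pow_mul_add_eq_xor hr, walsh_xor]

lemma dirichlet_add_of_le {s r : ℕ} (hr : r ≤ 2 ^ s) (q : ℕ) (x : G) :
    dirichlet (2 ^ s * q + r) x =
      dirichlet (2 ^ s * q) x + walsh (2 ^ s * q) x * dirichlet r x := by
  rw [dirichlet, sum_range_add, dirichlet, dirichlet, mul_sum]
  congr 1
  exact sum_congr rfl fun j hj => walsh_two_pow_mul_add ((mem_range.1 hj).trans_le hr) q x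

lemma dirichlet_two_pow (s : ℕ) (x : G) :
    dirichlet (2 ^ s) x = ∏ i ∈ range s, (1 + rad i x) := by
  induction s with
  | zero => simp [dirichlet, walsh]
  | succ s ih =>
    have h := dirichlet_add_of_le (le_refl (2 ^ s)) 1 x
    rw [mul_one, walsh_two_pow, ← two_mul, ← pow_succ'] at h
    rw [h, prod_range_succ, ← ih]
    ring

lemma dirichlet_two_pow_eq_zero {k s : ℕ} {y : G} (hk : k < s) (hy : y k = 1) :
    dirichlet (2 ^ s) y = 0 := by
  rw [dirichlet_two_pow]
  exact prod_eq_zero (mem_range.2 hk) (by simp [rad, hy, ZMod.val_one])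

lemma dirichlet_two_pow_mul_eq_zero {s : ℕ} {y : G} (h : dirichlet (2 ^ s) y = 0) (q : ℕ) :
    dirichlet (2 ^ s * q) y = 0 := by
  induction q with
  | zero => simp [dirichlet]
  | succ q ih => rw [mul_add_one, dirichlet_add_of_le le_rfl, ih, h, mul_zero, add_zero]

lemma abs_dirichlet_le (m : ℕ) (y : G) : |dirichlet m y| ≤ m := by
  refine (abs_sum_le_sum_abs _ _).trans ?_
  simpa using sum_le_sum fun j (_ : j ∈ range m) => abs_walsh_le_one j y

-- `D_{2^{k+1} q}` vanishes at `y`, so only the remainder of `m` modulo `2^{k+1}` contributes.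
lemma abs_dirichlet_le_of_eq_one {k : ℕ} {y : G} (hy : y k = 1) (m : ℕ) :
    |dirichlet m y| ≤ 2 ^ (k + 1) := by
  rw [← Nat.div_add_mod m (2 ^ (k + 1)), dirichlet_add_of_le (Nat.mod_lt _ (by positivity)).le,
    dirichlet_two_pow_mul_eq_zero (dirichlet_two_pow_eq_zero (Nat.lt_succ_self k) hy), zero_add,
    abs_mul]
  calc |walsh _ y| * |dirichlet (m % 2 ^ (k + 1)) y| ≤ 1 * (m % 2 ^ (k + 1) : ℕ) :=
        mul_le_mul (abs_walsh_le_one _ _) (abs_dirichlet_le _ _) (abs_nonneg _) zero_le_one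
    _ ≤ 2 ^ (k + 1) := by
        rw [one_mul]; exact_mod_cast (Nat.mod_lt _ (by positivity)).le

lemma cesA_pos {α : ℝ} (hα : -1 < α) (n : ℕ) : 0 < cesA α n :=
  div_pos (prod_pos fun i _ => by linarith [i.cast_nonneg (α := ℝ)]) (by positivity)

lemma cesA_succ (α : ℝ) (n : ℕ) : cesA α (n + 1) = cesA α n + cesA (α - 1) (n + 1) := by
  have hprod : ∏ i ∈ range (n + 1), (α - 1 + i + 1) = α * ∏ i ∈ range n, (α + i + 1) := by
    rw [prod_range_succ']
    push_cast
    ring_nf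
  rw [cesA, cesA, cesA, hprod, prod_range_succ, Nat.factorial_succ]
  push_cast
  field_simp
  ring

lemma sum_range_cesA_sub_one (α : ℝ) (n : ℕ) :
    ∑ m ∈ range (n + 1), cesA (α - 1) m = cesA α n := by
  induction n with
  | zero => simp [cesA]
  | succ n ih => rw [sum_range_succ, ih]; exact (cesA_succ α n).symm

lemma sum_Icc_cesA_sub_one_le {α : ℝ} (hα : 0 < α) (n : ℕ) :
    ∑ j ∈ Icc 1 n, cesA (α - 1) (n - j) ≤ cesA α n := by
  rw [← Ico_add_one_right_eq_Icc, sum_Ico_reflect _ _ le_rfl, Nat.add_sub_cancel, Nat.sub_self,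
    Nat.Ico_zero_eq_range, ← sum_range_cesA_sub_one, sum_range_succ]
  exact le_add_of_nonneg_right (cesA_pos (by linarith) n).le

lemma abs_cesaroMean_le {α B : ℝ} (hα : 0 < α) {f : G → ℝ} {x : G}
    (hS : ∀ j, |partialSum f j x| ≤ B) (n : ℕ) : |cesaroMean α f n x| ≤ B := by
  have hA := cesA_pos (by linarith) n
  have hB : 0 ≤ B := (abs_nonneg _).trans (hS 0)
  rw [cesaroMean, abs_mul, abs_inv, abs_of_pos hA, inv_mul_le_iff₀ hA]
  calc |∑ j ∈ Icc 1 n, cesA (α - 1) (n - j) * partialSum f j x|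
      ≤ ∑ j ∈ Icc 1 n, cesA (α - 1) (n - j) * B := by
        refine (abs_sum_le_sum_abs _ _).trans (sum_le_sum fun j _ => ?_)
        have hA' := cesA_pos (show -1 < α - 1 by linarith) (n - j)
        rw [abs_mul, abs_of_pos hA']
        exact mul_le_mul_of_nonneg_left (hS j) hA'.le
    _ ≤ cesA α n * B := by
        rw [← sum_mul]; exact mul_le_mul_of_nonneg_right (sum_Icc_cesA_sub_one_le hα n) hB

lemma measurable_walsh (n : ℕ) : Measurable (walsh n) :=
  Finset.measurable_prod _ fun i _ =>
    ((measurable_from_top (f := fun u : ZMod 2 => (-1 : ℝ) ^ u.val)).comp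
      (measurable_pi_apply i)).pow_const _

lemma dyadicI_eq_preimage (n : ℕ) (x : G) : dyadicI n x = projG n ⁻¹' {projG n x} := by
  ext y
  simp [dyadicI, projG, funext_iff, Fin.forall_iff]

lemma measurable_projG (n : ℕ) : Measurable (projG n) :=
  measurable_pi_lambda _ fun _ => measurable_pi_apply _

lemma measurableSet_dyadicI (n : ℕ) (x : G) : MeasurableSet (dyadicI n x) := by
  rw [dyadicI_eq_preimage]
  exact measurable_projG n (measurableSet_singleton _)

instance : IsProbabilityMeasure μG :=
  ⟨by rw [μG, ← TopologicalSpace.PositiveCompacts.coe_top (α := G)]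
      exact Measure.addHaarMeasure_self⟩

lemma μG_dyadicI_eq_dyadicI_zero (n : ℕ) (x : G) : μG (dyadicI n x) = μG (dyadicI n 0) := by
  have : dyadicI n x = (x + ·) ⁻¹' dyadicI n 0 := by
    ext y
    simp [dyadicI, CharTwo.add_eq_zero, eq_comm]
  rw [this, μG, measure_preimage_add]

lemma μG_real_dyadicI (n : ℕ) (x : G) : μG.real (dyadicI n x) = (2 ^ n)⁻¹ := by
  have hsum : ∑ w : Fin n → ZMod 2, μG (projG n ⁻¹' {w}) = 1 := by
    rw [sum_measure_preimage_singleton _ fun w _ => measurable_projG n (measurableSet_singleton w),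
      coe_univ, Set.preimage_univ, measure_univ]
  have hfiber (w : Fin n → ZMod 2) : μG (projG n ⁻¹' {w}) = μG (dyadicI n x) := by
    have hw : w = projG n (fun i => if h : i < n then w ⟨i, h⟩ else 0) := by
      funext i; simp [projG]
    rw [hw, ← dyadicI_eq_preimage, μG_dyadicI_eq_dyadicI_zero, μG_dyadicI_eq_dyadicI_zero n x]
  simp only [hfiber, sum_const, card_univ, Fintype.card_fun, ZMod.card, Fintype.card_fin,
    nsmul_eq_mul] at hsum
  rw [measureReal_def,
    ENNReal.eq_inv_of_mul_eq_one_left (a := μG (dyadicI n x)) (by rwa [mul_comm])]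
  simp

lemma integrable_mul_walsh {f : G → ℝ} (hf : Integrable f μG) (n : ℕ) :
    Integrable (fun t => f t * walsh n t) μG :=
  hf.mul_bdd (measurable_walsh n).aestronglyMeasurable
    (Eventually.of_forall fun t => (Real.norm_eq_abs _).trans_le (abs_walsh_le_one n t))

lemma partialSum_eq_integral_dirichlet {f : G → ℝ} (hf : Integrable f μG) (m : ℕ) (x : G) :
    partialSum f m x = ∫ t, f t * dirichlet m (x + t) ∂μG := by
  have hsummand (n : ℕ) (t : G) :
      f t * (walsh n x * walsh n t) = f t * walsh n t * walsh n x := by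
    ring
  simp only [dirichlet, walsh_add, mul_sum, hsummand]
  rw [integral_finsetSum _ fun n _ => (integrable_mul_walsh hf n).mul_const (walsh n x)]
  exact sum_congr rfl fun n _ => (integral_mul_const _ _).symm

lemma abs_partialSum_le {f : G → ℝ} {S : Set G} {C B : ℝ} {m : ℕ} {x : G}
    (hf : Integrable f μG) (hS : MeasurableSet S) (hfS : ∀ t ∉ S, f t = 0)
    (hfC : ∀ᵐ t ∂μG, |f t| ≤ C) (hD : ∀ t ∈ S, |dirichlet m (x + t)| ≤ B) :
    |partialSum f m x| ≤ C * B * μG.real S := by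
  rw [partialSum_eq_integral_dirichlet hf, ← Real.norm_eq_abs,
    ← setIntegral_eq_integral_of_forall_compl_eq_zero (s := S) fun t ht => by
      rw [hfS t ht, zero_mul]]
  refine norm_setIntegral_le_of_norm_le_const_ae (measure_lt_top μG S) ?_
  filter_upwards [ae_restrict_of_ae hfC, ae_restrict_mem hS] with t htC htS
  rw [Real.norm_eq_abs, abs_mul]
  exact mul_le_mul htC (hD t htS) (abs_nonneg _) ((abs_nonneg _).trans htC)

lemma ae_abs_le_of_eLpNorm_top_le {f : G → ℝ} {C : ℝ} (hC : 0 ≤ C)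
    (hf : eLpNorm f ⊤ μG ≤ ENNReal.ofReal C) : ∀ᵐ t ∂μG, |f t| ≤ C := by
  rw [eLpNorm_exponent_top] at hf
  filter_upwards [ae_le_eLpNormEssSup (f := f) (μ := μG)] with t ht
  rw [← ENNReal.ofReal_le_ofReal_iff hC, ← Real.enorm_eq_ofReal_abs]
  exact ht.trans hf

theorem statement10_general (α : ℝ) (hα0 : 0 < α) :
    ∃ c : ℝ, 0 < c ∧ ∀ M : ℕ, ∀ a : G → ℝ, Measurable a →
      (∀ x ∉ dyadicI M 0, a x = 0) →
      (∫ x in dyadicI M 0, a x ∂μG) = 0 →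
      eLpNorm a ⊤ μG ≤ ENNReal.ofReal ((2 : ℝ) ^ ((M : ℝ) * (1 + α))) →
      ∀ n : ℕ, 2 ^ M < n → ∀ k : ℕ, k < M →
        ∀ x ∈ dyadicI M (eG k),
          |cesaroMean α a n x| ≤ c * (2 : ℝ) ^ (α * (M : ℝ)) * 2 ^ k := by
  refine ⟨2, two_pos, fun M a ha haS _ haC n _ k hk x hx => ?_⟩
  have hint : Integrable a μG :=
    MemLp.integrable le_top ⟨ha.aestronglyMeasurable, haC.trans_lt ENNReal.ofReal_lt_top⟩
  have hD (m : ℕ) (t : G) (ht : t ∈ dyadicI M 0) : |dirichlet m (x + t)| ≤ 2 ^ (k + 1) := by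
    refine abs_dirichlet_le_of_eq_one ?_ m
    simp [hx k hk, ht k hk, eG]
  calc |cesaroMean α a n x|
      ≤ 2 ^ ((M : ℝ) * (1 + α)) * 2 ^ (k + 1) * μG.real (dyadicI M 0) :=
        abs_cesaroMean_le hα0 (fun m => abs_partialSum_le hint (measurableSet_dyadicI M 0) haS
          (ae_abs_le_of_eLpNorm_top_le (by positivity) haC) (hD m)) n
    _ = 2 * 2 ^ (α * (M : ℝ)) * 2 ^ k := by
        rw [μG_real_dyadicI, ← Real.rpow_natCast 2 M, ← Real.rpow_neg two_pos.le, mul_right_comm,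
          ← Real.rpow_add two_pos]
        ring_nf

/-- pointwise bound for Cesàro means of a `1/(1+α)`-atom on `I_M(e_k)`:
`|σ_n^α a(x)| ≤ c_α 2^{αM+k}` for `n > 2^M`, `0 ≤ k < M`. -/
theorem statement10 (α : ℝ) (hα0 : 0 < α) (hα1 : α < 1) :
    ∃ c : ℝ, 0 < c ∧ ∀ M : ℕ, ∀ a : G → ℝ, Measurable a →
      (∀ x ∉ dyadicI M 0, a x = 0) →
      (∫ x in dyadicI M 0, a x ∂μG) = 0 →
      eLpNorm a ⊤ μG ≤ ENNReal.ofReal ((2 : ℝ) ^ ((M : ℝ) * (1 + α))) →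
      ∀ n : ℕ, 2 ^ M < n → ∀ k : ℕ, k < M →
        ∀ x ∈ dyadicI M (eG k),
          |cesaroMean α a n x| ≤ c * (2 : ℝ) ^ (α * (M : ℝ)) * 2 ^ k :=
  statement10_general α hα0

end
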